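/- Let p1, q1, p2, q2 ∈ ℝ² with d(p1,q1) = d(p2,q2) ≠ 0. There exists a rotation g of the plane with g(p1) = q2 and g(q1) = p2 if and only if the lines ℓ_{p1,q2} and ℓ_{q1,p2} in ℝ³ intersect; moreover the intersection point is the parametrization ρ(g) of that rotation. -/
import Mathlib


open Real

/-- Rotation of the plane `ℂ` around center `O` by angle `α`. -/
noncomputable def rot (O : ℂ) (α : ℝ) : ℂ → ℂ :=
  fun z => O + Complex.exp (α * Complex.I) * (z - O)

/-- The line `ℓ_{p,q}`: the set of parametrized rotations `ρ(g) = (o_x,o_y,cot(α/2))`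
taking `p` to `q`. -/
noncomputable def rotSet (p q : ℂ) : Set (ℝ × ℝ × ℝ) :=
  {v | ∃ (O : ℂ) (α : ℝ), 0 < α ∧ α < 2 * π ∧ rot O α p = q ∧
    v = (O.re, O.im, Real.cot (α / 2))}

lemma cot_injOn_aux {x y : ℝ} (hx1 : 0 < x) (hx2 : x < π) (hy1 : 0 < y) (hy2 : y < π)
    (hxy : Real.cot x = Real.cot y) : x = y := by
  have key : ∀ t : ℝ, Real.cot t = Real.tan (π / 2 - t) := by
    intro t
    rw [Real.tan_pi_div_two_sub, Real.cot_eq_cos_div_sin, Real.tan_eq_sin_div_cos, inv_div]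
  rw [key, key] at hxy
  have := Real.injOn_tan (Set.mem_Ioo.2 ⟨by linarith, by linarith⟩)
    (Set.mem_Ioo.2 ⟨by linarith, by linarith⟩) hxy
  linarith

/-- There is a rotation taking `p1 ↦ q2` and `q1 ↦ p2` iff the lines `ℓ_{p1,q2}` and
`ℓ_{q1,p2}` intersect; moreover the intersection point is `ρ` of that rotation. -/
theorem stmt_12 (p1 q1 p2 q2 : ℂ) (h : dist p1 q1 = dist p2 q2)
    (h0 : dist p1 q1 ≠ 0) :
    ((∃ (O : ℂ) (α : ℝ), 0 < α ∧ α < 2 * π ∧ rot O α p1 = q2 ∧ rot O α q1 = p2) ↔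
      (rotSet p1 q2 ∩ rotSet q1 p2).Nonempty) ∧
    (∀ (O : ℂ) (α : ℝ), 0 < α → α < 2 * π → rot O α p1 = q2 → rot O α q1 = p2 →
      ((O.re, O.im, Real.cot (α / 2)) : ℝ × ℝ × ℝ) ∈ rotSet p1 q2 ∩ rotSet q1 p2) := by
  have hmem : ∀ (O : ℂ) (α : ℝ), 0 < α → α < 2 * π → rot O α p1 = q2 → rot O α q1 = p2 →
      ((O.re, O.im, Real.cot (α / 2)) : ℝ × ℝ × ℝ) ∈ rotSet p1 q2 ∩ rotSet q1 p2 := by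
    intro O α hα1 hα2 h1 h2
    exact ⟨⟨O, α, hα1, hα2, h1, rfl⟩, ⟨O, α, hα1, hα2, h2, rfl⟩⟩
  refine ⟨⟨fun ⟨O, α, hα1, hα2, h1, h2⟩ => ⟨_, hmem O α hα1 hα2 h1 h2⟩, ?_⟩, hmem⟩
  rintro ⟨v, ⟨O1, α1, hα11, hα12, hr1, hv1⟩, ⟨O2, α2, hα21, hα22, hr2, hv2⟩⟩
  have hO : O1 = O2 := by
    apply Complex.ext
    · have := congrArg Prod.fst (hv1.symm.trans hv2); simpa using this
    · have := congrArg (fun v : ℝ × ℝ × ℝ => v.2.1) (hv1.symm.trans hv2); simpa using this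
  have hα : α1 = α2 := by
    have hc : Real.cot (α1 / 2) = Real.cot (α2 / 2) := by
      have := congrArg (fun v : ℝ × ℝ × ℝ => v.2.2) (hv1.symm.trans hv2); simpa using this
    have := cot_injOn_aux (by linarith) (by linarith) (by linarith) (by linarith) hc
    linarith
  exact ⟨O1, α1, hα11, hα12, hr1, by rw [hO, hα]; exact hr2⟩
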